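/- Let Q be a property of pairs (G, H) consisting of a profinite group G and a closed subgroup H ≤ G, satisfying: (a) if Q(G,H) and K is a closed subgroup of G, then Q(K, H ∩ K); (b) if Q(G,H) and π : G → G' is a continuous homomorphism of profinite groups, then Q(π(G), π(H)); (c) if Q(G,H) and Q(G,K), then Q(G, M), where M is the smallest closed subgroup of G containing H and K; (d) if (H_i)_{i ∈ I} is a family of closed subgroups of G totally ordered by inclusion with Q(G,H_i) for all i, then Q(G, J), where J is the topological closure of ⋃_{i ∈ I} H_i. Then for every d ≥ 2 and every closed fractal subgroup G of Aut T_d, the property H ↦ Q(G,H) of closed subgroups of G is self-similar: if Q(G,H) holds, then Q(G, J) holds for J the self-similar closure of H in G. -/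

import Mathlib

open scoped Pointwise

namespace TreeDyn

/-- Vertices of the `d`-regular rooted tree: finite words over `{0,…,d-1}`,
with the empty word as root and children of `w` the words `w ++ [x]`. -/
abbrev Vertex (d : ℕ) := List (Fin d)

/-- A function on words is length-preserving and prefix-preserving. -/
def LP (d : ℕ) (f : Vertex d → Vertex d) : Prop :=
  (∀ w : Vertex d, (f w).length = w.length) ∧
    ∀ v w : Vertex d, v <+: w → f v <+: f w

theorem LP.id' (d : ℕ) : LP d id := ⟨fun _ => rfl, fun _ _ h => h⟩

theorem LP.comp {d : ℕ} {f g : Vertex d → Vertex d} (hf : LP d f) (hg : LP d g) :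
    LP d (f ∘ g) :=
  ⟨fun w => (hf.1 (g w)).trans (hg.1 w), fun v w h => hf.2 _ _ (hg.2 _ _ h)⟩

/-- The automorphism group of the rooted `d`-regular tree, realized as the subgroup of
permutations of the vertex set which fix the root and preserve the child relation
(equivalently: length- and prefix-preserving permutations). -/
def treeAut (d : ℕ) : Subgroup (Equiv.Perm (Vertex d)) where
  carrier := {g | LP d ⇑g ∧ LP d ⇑g⁻¹}
  one_mem' := ⟨LP.id' d, by simpa using LP.id' d⟩
  mul_mem' := by
    rintro a b ⟨ha1, ha2⟩ ⟨hb1, hb2⟩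
    refine ⟨?_, ?_⟩
    · simpa [Equiv.Perm.coe_mul] using ha1.comp hb1
    · rw [mul_inv_rev]
      simpa [Equiv.Perm.coe_mul] using hb2.comp ha2
  inv_mem' := by
    rintro a ⟨h1, h2⟩
    exact ⟨h2, by simpa using h1⟩

/-- `Aut T_d`, the automorphism group of the `d`-regular rooted tree. -/
abbrev AutT (d : ℕ) := ↥(treeAut d)

namespace AutT

variable {d : ℕ}

/-- The underlying permutation of the vertices. -/
def toPerm (g : AutT d) : Equiv.Perm (Vertex d) := g.1

theorem toPerm_mul (g h : AutT d) : (g * h).toPerm = g.toPerm * h.toPerm := rfl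

theorem toPerm_inv (g : AutT d) : (g⁻¹).toPerm = (g.toPerm)⁻¹ := rfl

theorem toPerm_one : (1 : AutT d).toPerm = 1 := rfl

theorem length_apply (g : AutT d) (w : Vertex d) : (g.toPerm w).length = w.length :=
  g.2.1.1 w

theorem prefix_apply (g : AutT d) {v w : Vertex d} (h : v <+: w) :
    g.toPerm v <+: g.toPerm w :=
  g.2.1.2 v w h

theorem take_apply (g : AutT d) (v u : Vertex d) :
    (g.toPerm (v ++ u)).take v.length = g.toPerm v := by
  have h : g.toPerm v <+: g.toPerm (v ++ u) := g.prefix_apply (List.prefix_append v u)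
  have h2 := List.prefix_iff_eq_take.mp h
  rw [length_apply] at h2
  exact h2.symm

theorem apply_append (g : AutT d) (v u : Vertex d) :
    g.toPerm (v ++ u) = g.toPerm v ++ (g.toPerm (v ++ u)).drop v.length := by
  conv_lhs => rw [← List.take_append_drop v.length (g.toPerm (v ++ u))]
  rw [take_apply]

/-- The section function: the action of `g` on the subtree over `v`, transported
to the whole tree. -/
def secFun (g : AutT d) (v : Vertex d) : Vertex d → Vertex d :=
  fun u => (g.toPerm (v ++ u)).drop v.length

theorem secFun_spec (g : AutT d) (v u : Vertex d) :
    g.toPerm (v ++ u) = g.toPerm v ++ secFun g v u :=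
  apply_append g v u

theorem secFun_left (g : AutT d) (v u : Vertex d) :
    secFun g⁻¹ (g.toPerm v) (secFun g v u) = u := by
  have h1 := secFun_spec g⁻¹ (g.toPerm v) (secFun g v u)
  rw [← secFun_spec g v u] at h1
  rw [toPerm_inv] at h1
  simp only [Equiv.Perm.inv_def, Equiv.symm_apply_apply] at h1
  exact (List.append_cancel_left h1).symm

theorem LP_secFun (g : AutT d) (v : Vertex d) : LP d (secFun g v) := by
  constructor
  · intro w
    simp only [secFun, List.length_drop, length_apply, List.length_append]
    omega
  · intro u1 u2 h
    have h2 : g.toPerm (v ++ u1) <+: g.toPerm (v ++ u2) := by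
      refine g.prefix_apply ?_
      obtain ⟨t, ht⟩ := h
      exact ⟨t, by rw [List.append_assoc, ht]⟩
    exact h2.drop v.length

/-- The section of the tree automorphism `g` at the vertex `v`: the automorphism `g|_v` with
`g (v ++ u) = g v ++ g|_v u`. -/
def sec (g : AutT d) (v : Vertex d) : AutT d :=
  ⟨{ toFun := secFun g v
     invFun := secFun g⁻¹ (g.toPerm v)
     left_inv := secFun_left g v
     right_inv := by
       intro u
       have h := secFun_left g⁻¹ (g.toPerm v) u
       rw [inv_inv] at h
       rw [toPerm_inv] at h
       simp only [Equiv.Perm.inv_def, Equiv.symm_apply_apply] at h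
       exact h },
   by
     refine ⟨LP_secFun g v, ?_⟩
     have : ⇑(({ toFun := secFun g v
                 invFun := secFun g⁻¹ (g.toPerm v)
                 left_inv := secFun_left g v
                 right_inv := by
                   intro u
                   have h := secFun_left g⁻¹ (g.toPerm v) u
                   rw [inv_inv] at h
                   rw [toPerm_inv] at h
                   simp only [Equiv.Perm.inv_def, Equiv.symm_apply_apply] at h
                   exact h } : Equiv.Perm (Vertex d))⁻¹) = secFun g⁻¹ (g.toPerm v) := rfl
     rw [this]
     exact LP_secFun g⁻¹ (g.toPerm v)⟩

theorem sec_apply (g : AutT d) (v u : Vertex d) :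
    (sec g v).toPerm u = (g.toPerm (v ++ u)).drop v.length := rfl

end AutT

open AutT

/-- The stabilizer of the vertex `v` in `Aut T_d`. -/
def stabT (d : ℕ) (v : Vertex d) : Subgroup (AutT d) where
  carrier := {g | g.toPerm v = v}
  one_mem' := rfl
  mul_mem' := by
    intro a b ha hb
    show (a * b).toPerm v = v
    rw [toPerm_mul, Equiv.Perm.mul_apply]
    rw [show b.toPerm v = v from hb, show a.toPerm v = v from ha]
  inv_mem' := by
    intro a ha
    show (a⁻¹).toPerm v = v
    rw [toPerm_inv]
    rw [Equiv.Perm.inv_eq_iff_eq]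
    exact (show a.toPerm v = v from ha).symm

/-- The self-similarity homomorphism `π_v` from the stabilizer of `v` to `Aut T_d`,
`g ↦ g|_v`. -/
def secHom (d : ℕ) (v : Vertex d) : (stabT d v) →* AutT d where
  toFun g := sec g.1 v
  map_one' := by
    apply Subtype.ext
    apply Equiv.ext
    intro u
    show ((1 : AutT d).toPerm (v ++ u)).drop v.length = (1 : AutT d).toPerm u
    rw [toPerm_one]
    simp [List.drop_left]
  map_mul' := by
    intro a b
    apply Subtype.ext
    apply Equiv.ext
    intro u
    have hb : (b.1).toPerm v = v := b.2
    show ((a.1 * b.1).toPerm (v ++ u)).drop v.length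
        = (sec a.1 v).toPerm ((sec b.1 v).toPerm u)
    rw [toPerm_mul, Equiv.Perm.mul_apply]
    congr 1
    congr 1
    have h := secFun_spec b.1 v u
    rw [hb] at h
    exact h

/-- The image subgroup `H^v = π_v(H_v)` of the stabilizer of `v` in `H` under the
self-similarity map. -/
def secSG (d : ℕ) (H : Subgroup (AutT d)) (v : Vertex d) : Subgroup (AutT d) :=
  (H.subgroupOf (stabT d v)).map (secHom d v)

/-- A subgroup of `Aut T_d` is self-similar if `H^v ≤ H` for every vertex `v`. -/
def IsSelfSimilar (d : ℕ) (H : Subgroup (AutT d)) : Prop :=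
  ∀ v : Vertex d, secSG d H v ≤ H

/-- A subgroup of `Aut T_d` is fractal if `H^v = H` for every vertex `v`. -/
def IsFractal (d : ℕ) (H : Subgroup (AutT d)) : Prop :=
  ∀ v : Vertex d, secSG d H v = H

end TreeDyn
namespace TreeDyn

open AutT

variable {d : ℕ}

instance : TopologicalSpace (Vertex d) := ⊥
instance : DiscreteTopology (Vertex d) := ⟨rfl⟩

/-- The profinite topology on `Aut T_d`: the topology of pointwise convergence on vertices. -/
instance : TopologicalSpace (AutT d) :=
  TopologicalSpace.induced (fun g : AutT d => (g.toPerm : Vertex d → Vertex d)) inferInstance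

theorem continuous_toFun : Continuous fun g : AutT d => (g.toPerm : Vertex d → Vertex d) :=
  continuous_induced_dom

theorem continuous_ev (x : Vertex d) : Continuous fun g : AutT d => g.toPerm x :=
  (continuous_apply x).comp continuous_toFun

instance : IsTopologicalGroup (AutT d) where
  continuous_mul := by
    apply continuous_induced_rng.2
    show Continuous fun p : AutT d × AutT d => ((p.1 * p.2).toPerm : Vertex d → Vertex d)
    apply continuous_pi
    intro x
    rw [continuous_discrete_rng]
    intro z
    have heq : ((fun p : AutT d × AutT d => (p.1 * p.2).toPerm x)) ⁻¹' {z}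
        = ⋃ y : Vertex d, ((fun p : AutT d × AutT d => p.2.toPerm x) ⁻¹' {y})
            ∩ ((fun p : AutT d × AutT d => p.1.toPerm y) ⁻¹' {z}) := by
      ext p
      simp only [Set.mem_preimage, Set.mem_singleton_iff, Set.mem_iUnion, Set.mem_inter_iff]
      constructor
      · intro h
        exact ⟨p.2.toPerm x, rfl, by rw [toPerm_mul, Equiv.Perm.mul_apply] at h; exact h⟩
      · rintro ⟨y, h1, h2⟩
        rw [toPerm_mul, Equiv.Perm.mul_apply, h1, h2]
    rw [heq]
    apply isOpen_iUnion
    intro y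
    exact ((isOpen_discrete _).preimage ((continuous_ev x).comp continuous_snd)).inter
      ((isOpen_discrete _).preimage ((continuous_ev y).comp continuous_fst))
  continuous_inv := by
    apply continuous_induced_rng.2
    show Continuous fun g : AutT d => ((g⁻¹).toPerm : Vertex d → Vertex d)
    apply continuous_pi
    intro x
    rw [continuous_discrete_rng]
    intro z
    have heq : (fun g : AutT d => (g⁻¹).toPerm x) ⁻¹' {z}
        = (fun g : AutT d => g.toPerm z) ⁻¹' {x} := by
      ext g
      simp only [Set.mem_preimage, Set.mem_singleton_iff]
      rw [toPerm_inv]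
      exact Equiv.Perm.inv_eq_iff_eq.trans eq_comm
    rw [heq]
    exact (isOpen_discrete _).preimage (continuous_ev z)

end TreeDyn
namespace TreeDyn

open AutT

/-- `J` is the self-similar closure of `H` in `G`: the smallest closed self-similar
subgroup of `G` containing `H`. -/
def IsSelfSimilarClosure (d : ℕ) (G H J : Subgroup (AutT d)) : Prop :=
  H ≤ J ∧ J ≤ G ∧ IsClosed (J : Set (AutT d)) ∧ IsSelfSimilar d J ∧
    ∀ J' : Subgroup (AutT d), H ≤ J' → J' ≤ G → IsClosed (J' : Set (AutT d)) →
      IsSelfSimilar d J' → J ≤ J'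

/-- The pointwise stabilizer in `Aut T_d` of the vertices at level `m`. -/
def levelStab (d : ℕ) (m : ℕ) : Subgroup (AutT d) where
  carrier := {g | ∀ v : Vertex d, v.length = m → g.toPerm v = v}
  one_mem' := fun _ _ => rfl
  mul_mem' := by
    intro a b ha hb v hv
    show (a * b).toPerm v = v
    rw [toPerm_mul, Equiv.Perm.mul_apply, hb v hv, ha v hv]
  inv_mem' := by
    intro a ha v hv
    show (a⁻¹).toPerm v = v
    rw [toPerm_inv, Equiv.Perm.inv_eq_iff_eq]
    exact (ha v hv).symm

/-- A topological group is pronilpotent if its quotient by every open normal subgroup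
is nilpotent. -/
def Pronilpotent (G : Type*) [Group G] [TopologicalSpace G] : Prop :=
  ∀ (N : Subgroup G) [N.Normal], IsOpen (N : Set G) → Group.IsNilpotent (G ⧸ N)

/-- A topological group is pro-`p` if its quotient by every open normal subgroup
is a `p`-group. -/
def IsProP (p : ℕ) (G : Type*) [Group G] [TopologicalSpace G] : Prop :=
  ∀ (N : Subgroup G) [N.Normal], IsOpen (N : Set G) → IsPGroup p (G ⧸ N)

/-- A topological group is prosolvable if its quotient by every open normal subgroup
is solvable. -/
def Prosolvable (G : Type*) [Group G] [TopologicalSpace G] : Prop :=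
  ∀ (N : Subgroup G) [N.Normal], IsOpen (N : Set G) → IsSolvable (G ⧸ N)

/-- The Frattini subgroup of a topological group: the intersection of its
maximal open (proper) subgroups. -/
def frattiniOpen (G : Type*) [Group G] [TopologicalSpace G] : Subgroup G :=
  sInf {M : Subgroup G | IsOpen (M : Set G) ∧ M ≠ ⊤ ∧
    ∀ M' : Subgroup G, IsOpen (M' : Set G) → M < M' → M' = ⊤}

end TreeDyn
namespace TreeDyn

open AutT

variable {d : ℕ}

/-- The cyclic successor on `Fin d`. -/
def succFin (x : Fin d) : Fin d :=
  ⟨(x.1 + 1) % d, Nat.mod_lt _ (Nat.lt_of_le_of_lt (Nat.zero_le _) x.2)⟩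

/-- The cyclic predecessor on `Fin d`. -/
def predFin (x : Fin d) : Fin d :=
  ⟨(x.1 + (d - 1)) % d, Nat.mod_lt _ (Nat.lt_of_le_of_lt (Nat.zero_le _) x.2)⟩

theorem predFin_succFin (x : Fin d) : predFin (succFin x) = x := by
  have hd : 0 < d := Nat.lt_of_le_of_lt (Nat.zero_le _) x.2
  apply Fin.ext
  show ((x.1 + 1) % d + (d - 1)) % d = x.1
  rw [Nat.mod_add_mod, show x.1 + 1 + (d - 1) = x.1 + d by omega, Nat.add_mod_right,
    Nat.mod_eq_of_lt x.2]

theorem succFin_predFin (x : Fin d) : succFin (predFin x) = x := by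
  have hd : 0 < d := Nat.lt_of_le_of_lt (Nat.zero_le _) x.2
  apply Fin.ext
  show ((x.1 + (d - 1)) % d + 1) % d = x.1
  rw [Nat.mod_add_mod, show x.1 + (d - 1) + 1 = x.1 + d by omega, Nat.add_mod_right,
    Nat.mod_eq_of_lt x.2]

theorem succFin_val_eq_zero_iff (x : Fin d) : (succFin x).1 = 0 ↔ x.1 + 1 = d := by
  show (x.1 + 1) % d = 0 ↔ x.1 + 1 = d
  by_cases h : x.1 + 1 = d
  · simp [h, Nat.mod_self]
  · rw [Nat.mod_eq_of_lt (by omega)]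
    omega

theorem predFin_val_succ_eq_iff (x : Fin d) : (predFin x).1 + 1 = d ↔ x.1 = 0 := by
  have hd : 0 < d := Nat.lt_of_le_of_lt (Nat.zero_le _) x.2
  show (x.1 + (d - 1)) % d + 1 = d ↔ x.1 = 0
  rcases Nat.eq_zero_or_pos x.1 with h | h
  · rw [h]
    simp only [Nat.zero_add]
    rw [Nat.mod_eq_of_lt (show d - 1 < d by omega)]
    simp only [iff_true, eq_self_iff_true]
    omega
  · rw [show x.1 + (d - 1) = (x.1 - 1) + d by omega, Nat.add_mod_right,
      Nat.mod_eq_of_lt (show x.1 - 1 < d by omega)]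
    omega

/-- The odometer function: adds one with carrying, on words read root-first. -/
def odF (d : ℕ) : Vertex d → Vertex d
  | [] => []
  | x :: u => succFin x :: (if x.1 + 1 = d then odF d u else u)

/-- The inverse odometer function. -/
def odG (d : ℕ) : Vertex d → Vertex d
  | [] => []
  | x :: u => predFin x :: (if x.1 = 0 then odG d u else u)

theorem odG_odF (u : Vertex d) : odG d (odF d u) = u := by
  induction u with
  | nil => rfl
  | cons x t ih =>
    simp only [odF, odG, predFin_succFin]
    by_cases h : x.1 + 1 = d
    · rw [if_pos h, if_pos ((succFin_val_eq_zero_iff x).mpr h), ih]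
    · rw [if_neg h, if_neg (fun hc => h ((succFin_val_eq_zero_iff x).mp hc))]

theorem odF_odG (u : Vertex d) : odF d (odG d u) = u := by
  induction u with
  | nil => rfl
  | cons x t ih =>
    simp only [odF, odG, succFin_predFin]
    by_cases h : x.1 = 0
    · rw [if_pos h, if_pos ((predFin_val_succ_eq_iff x).mpr h), ih]
    · rw [if_neg h, if_neg (fun hc => h ((predFin_val_succ_eq_iff x).mp hc))]

theorem odF_append (a b : Vertex d) :
    odF d (a ++ b) = odF d a ++ (if ∀ x ∈ a, x.1 + 1 = d then odF d b else b) := by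
  induction a with
  | nil => simp [odF]
  | cons x t ih =>
    by_cases h : x.1 + 1 = d
    · by_cases h2 : ∀ y ∈ t, y.1 + 1 = d
      · have hall : ∀ y ∈ x :: t, y.1 + 1 = d := by
          intro y hy
          rcases List.mem_cons.mp hy with rfl | hy
          · exact h
          · exact h2 y hy
        simp only [List.cons_append, List.append_eq, odF, if_pos h, if_pos h2, if_pos hall, ih]
      · have hall : ¬ ∀ y ∈ x :: t, y.1 + 1 = d :=
          fun hc => h2 fun y hy => hc y (List.mem_cons_of_mem x hy)
        simp only [List.cons_append, List.append_eq, odF, if_pos h, if_neg h2, if_neg hall, ih]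
    · have hall : ¬ ∀ y ∈ x :: t, y.1 + 1 = d :=
        fun hc => h (hc x List.mem_cons_self)
      simp only [List.cons_append, List.append_eq, odF, if_neg h, if_neg hall]

theorem odG_append (a b : Vertex d) :
    odG d (a ++ b) = odG d a ++ (if ∀ x ∈ a, x.1 = 0 then odG d b else b) := by
  induction a with
  | nil => simp [odG]
  | cons x t ih =>
    by_cases h : x.1 = 0
    · by_cases h2 : ∀ y ∈ t, y.1 = 0
      · have hall : ∀ y ∈ x :: t, y.1 = 0 := by
          intro y hy
          rcases List.mem_cons.mp hy with rfl | hy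
          · exact h
          · exact h2 y hy
        simp only [List.cons_append, List.append_eq, odG, if_pos h, if_pos h2, if_pos hall, ih]
      · have hall : ¬ ∀ y ∈ x :: t, y.1 = 0 :=
          fun hc => h2 fun y hy => hc y (List.mem_cons_of_mem x hy)
        simp only [List.cons_append, List.append_eq, odG, if_pos h, if_neg h2, if_neg hall, ih]
    · have hall : ¬ ∀ y ∈ x :: t, y.1 = 0 :=
        fun hc => h (hc x List.mem_cons_self)
      simp only [List.cons_append, List.append_eq, odG, if_neg h, if_neg hall]

theorem LP_odF : LP d (odF d) := by
  constructor
  · intro w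
    induction w with
    | nil => rfl
    | cons x t ih =>
      simp only [odF]
      by_cases h : x.1 + 1 = d <;> simp [h, ih]
  · intro v w h
    obtain ⟨t, rfl⟩ := h
    rw [odF_append]
    exact ⟨_, rfl⟩

theorem LP_odG : LP d (odG d) := by
  constructor
  · intro w
    induction w with
    | nil => rfl
    | cons x t ih =>
      simp only [odG]
      by_cases h : x.1 = 0 <;> simp [h, ih]
  · intro v w h
    obtain ⟨t, rfl⟩ := h
    rw [odG_append]
    exact ⟨_, rfl⟩

/-- The standard odometer as a permutation of the vertices. -/
def odPerm (d : ℕ) : Equiv.Perm (Vertex d) where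
  toFun := odF d
  invFun := odG d
  left_inv := odG_odF
  right_inv := odF_odG

/-- The standard odometer `ω ∈ Aut T_d` (adds one to a `d`-adic digit string,
with carrying). -/
def od (d : ℕ) : AutT d :=
  ⟨odPerm d, ⟨LP_odF, LP_odG⟩⟩

/-- The standard `d`-cycle `σ = (0 1 … d-1)` on the first level. -/
def sigmaFin (d : ℕ) : Equiv.Perm (Fin d) where
  toFun := succFin
  invFun := predFin
  left_inv := predFin_succFin
  right_inv := succFin_predFin

end TreeDyn

/-!
Enumerate the vertices so that each one occurs infinitely often, and grow `H` by alternately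
adjoining the sections at the next vertex and taking the closed join. Since `G` is fractal, the
section map `G_v → G` is a continuous surjection, so (a) and (b) carry `Q` from a subgroup to
its sections; (c) handles the joins and (d) the closure of the increasing union. That closure
is self-similar because vertex stabilizers are open and sections are continuous, and it lies
in every closed self-similar subgroup containing `H`, so it is the self-similar closure.
-/

namespace Subgroup

variable {X : Type*} [Group X] {A G : Subgroup X}

theorem subgroupOf_iSup {ι : Sort*} {K : ι → Subgroup X} (hK : ∀ i, K i ≤ G) :
    (⨆ i, K i).subgroupOf G = ⨆ i, (K i).subgroupOf G := by
  apply map_injective G.subtype_injective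
  rw [map_iSup, subgroupOf_map_subtype, inf_of_le_left (iSup_le hK)]
  exact iSup_congr fun i => ((subgroupOf_map_subtype _ _).trans (inf_of_le_left (hK i))).symm

theorem isClosed_subgroupOf [TopologicalSpace X] (hA : IsClosed (A : Set X)) (G : Subgroup X) :
    IsClosed (A.subgroupOf G : Set G) :=
  hA.preimage continuous_subtype_val

theorem topologicalClosure_subgroupOf [TopologicalSpace X] [IsTopologicalGroup X] (hA : A ≤ G) :
    (A.subgroupOf G).topologicalClosure = A.topologicalClosure.subgroupOf G := by
  apply SetLike.ext'
  change _root_.closure (((↑) : G → X) ⁻¹' A) = ((↑) : G → X) ⁻¹' _root_.closure A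
  rw [Topology.IsInducing.subtypeVal.closure_eq_preimage_closure_image]
  congr 2
  exact Set.image_preimage_eq_of_subset fun x hx => ⟨⟨x, hA hx⟩, rfl⟩

end Subgroup

namespace TreeDyn

open AutT Topology

variable {d : ℕ}

theorem isEmbedding_toFun : IsEmbedding fun g : AutT d => (⇑g.toPerm : Vertex d → Vertex d) :=
  ⟨⟨rfl⟩, fun _ _ h => Subtype.ext (Equiv.ext (congrFun h))⟩

instance : T2Space (AutT d) := isEmbedding_toFun.t2Space

instance : TotallyDisconnectedSpace (AutT d) :=
  isEmbedding_toFun.isTotallyDisconnected_range.mp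
    (isTotallyDisconnected_of_totallyDisconnectedSpace _)

theorem isClosed_setOf_rel_of_discrete {X V : Type*} [TopologicalSpace X] [TopologicalSpace V]
    [DiscreteTopology V] {a b : X → V} (ha : Continuous a) (hb : Continuous b)
    (r : V → V → Prop) : IsClosed {x | r (a x) (b x)} :=
  (isClosed_discrete {p : V × V | r p.1 p.2}).preimage (ha.prodMk hb)

theorem isClosed_setOf_LP : IsClosed {f : Vertex d → Vertex d | LP d f} := by
  have ev (w : Vertex d) : Continuous fun f : Vertex d → Vertex d => f w := continuous_apply w
  simp only [LP, Set.ofPred_and, Set.ofPred_forall]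
  exact (isClosed_iInter fun w => isClosed_setOf_rel_of_discrete (ev w) continuous_const
      fun a b => a.length = b.length).inter
    (isClosed_iInter fun v => isClosed_iInter fun w => isClosed_iInter fun _ =>
      isClosed_setOf_rel_of_discrete (ev v) (ev w) List.IsPrefix)

/-- Recording `g⁻¹` next to `g` makes the image cut out by pointwise conditions. -/
def toFunPair (g : AutT d) : (Vertex d → Vertex d) × (Vertex d → Vertex d) :=
  (⇑g.toPerm, ⇑g⁻¹.toPerm)

theorem isEmbedding_toFunPair : IsEmbedding (toFunPair (d := d)) :=
  .of_comp (continuous_toFun.prodMk (continuous_toFun.comp continuous_inv)) continuous_fst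
    isEmbedding_toFun

theorem range_toFunPair : Set.range (toFunPair (d := d)) =
    {p | LP d p.1 ∧ LP d p.2 ∧ ∀ v w, p.2 v = w ↔ p.1 w = v} := by
  ext p
  constructor
  · rintro ⟨g, rfl⟩
    exact ⟨g.2.1, g.2.2, fun v w =>
      show g.toPerm⁻¹ v = w ↔ g.toPerm w = v from Equiv.Perm.inv_eq_iff_eq.trans eq_comm⟩
  · rintro ⟨h₁, h₂, hinv⟩
    let e : Equiv.Perm (Vertex d) :=
      ⟨p.1, p.2, fun w => (hinv (p.1 w) w).mpr rfl, fun v => (hinv v (p.2 v)).mp rfl⟩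
    exact ⟨⟨e, h₁, h₂⟩, rfl⟩

theorem isClosed_range_toFunPair : IsClosed (Set.range (toFunPair (d := d))) := by
  rw [range_toFunPair]
  refine (isClosed_setOf_LP.preimage continuous_fst).inter
    ((isClosed_setOf_LP.preimage continuous_snd).inter ?_)
  show IsClosed {p : (Vertex d → Vertex d) × (Vertex d → Vertex d) |
    ∀ v w, p.2 v = w ↔ p.1 w = v}
  simp only [Set.ofPred_forall]
  exact isClosed_iInter fun v => isClosed_iInter fun w =>
    isClosed_setOf_rel_of_discrete (X := (Vertex d → Vertex d) × (Vertex d → Vertex d))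
      (a := fun p => p.2 v) (b := fun p => p.1 w) (by fun_prop)
      (by fun_prop) fun a b : Vertex d => a = w ↔ b = v

theorem isCompact_setOf_length_apply :
    IsCompact {f : Vertex d → Vertex d | ∀ w, (f w).length = w.length} :=
  isCompact_pi_infinite fun w : Vertex d => (List.finite_length_eq _ w.length).isCompact

instance : CompactSpace (AutT d) := by
  refine ⟨isEmbedding_toFunPair.isCompact_iff.mpr ?_⟩
  rw [Set.image_univ]
  refine (isCompact_setOf_length_apply.prod isCompact_setOf_length_apply).of_isClosed_subset
    isClosed_range_toFunPair ?_
  rintro _ ⟨g, rfl⟩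
  exact ⟨g.2.1.1, g⁻¹.2.1.1⟩

theorem continuous_sec (v : Vertex d) : Continuous fun g : AutT d => sec g v :=
  continuous_induced_rng.2 <| continuous_pi fun u =>
    (continuous_of_discreteTopology (f := fun w : Vertex d => w.drop v.length)).comp
      (continuous_ev (v ++ u))

theorem isOpen_stabT (v : Vertex d) : IsOpen (stabT d v : Set (AutT d)) :=
  (isOpen_discrete {v}).preimage (continuous_ev v)

theorem isClosed_stabT (v : Vertex d) : IsClosed (stabT d v : Set (AutT d)) :=
  Subgroup.isClosed_of_isOpen _ (isOpen_stabT v)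

theorem mem_secSG_iff {H : Subgroup (AutT d)} {v : Vertex d} {x : AutT d} :
    x ∈ secSG d H v ↔ ∃ g ∈ H, g ∈ stabT d v ∧ sec g v = x :=
  ⟨fun ⟨g, hg, hx⟩ => ⟨g, hg, g.2, hx⟩,
    fun ⟨g, hg, hgv, hx⟩ => ⟨⟨g, hgv⟩, hg, hx⟩⟩

theorem secSG_mono {H K : Subgroup (AutT d)} (h : H ≤ K) (v : Vertex d) :
    secSG d H v ≤ secSG d K v :=
  Subgroup.map_mono (Subgroup.comap_mono h)

theorem isClosed_secSG {H : Subgroup (AutT d)} (hH : IsClosed (H : Set (AutT d)))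
    (v : Vertex d) : IsClosed (secSG d H v : Set (AutT d)) := by
  have : CompactSpace (stabT d v) := isCompact_iff_compactSpace.mp (isClosed_stabT v).isCompact
  rw [secSG, Subgroup.coe_map]
  exact ((hH.preimage continuous_subtype_val).isCompact.image
    ((continuous_sec v).comp continuous_subtype_val)).isClosed

theorem IsSelfSimilar.topologicalClosure {U : Subgroup (AutT d)} (hU : IsSelfSimilar d U) :
    IsSelfSimilar d U.topologicalClosure := by
  intro v x hx
  obtain ⟨g, hg, hgv, rfl⟩ := mem_secSG_iff.mp hx
  have hg' : g ∈ closure ((stabT d v : Set (AutT d)) ∩ U) :=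
    (isOpen_stabT v).inter_closure ⟨hgv, hg⟩
  exact map_mem_closure (f := (sec · v)) (continuous_sec v) hg' fun h ⟨hhv, hhU⟩ =>
    hU v (mem_secSG_iff.mpr ⟨h, hhU, hhv, rfl⟩)

theorem exists_seq_forall_exists_ge_eq (α : Type*) [Countable α] [Nonempty α] :
    ∃ e : ℕ → α, ∀ n a, ∃ m, n ≤ m ∧ e m = a := by
  obtain ⟨s, hs⟩ := exists_surjective_nat α
  refine ⟨fun m => s m.unpair.1, fun n a => ?_⟩
  obtain ⟨k, rfl⟩ := hs a
  exact ⟨Nat.pair k n, Nat.right_le_pair k n, by simp⟩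

section SecChain

variable (H : Subgroup (AutT d)) (e : ℕ → Vertex d)

def secChain : ℕ → Subgroup (AutT d)
  | 0 => H
  | n + 1 => (secChain n ⊔ secSG d (secChain n) (e n)).topologicalClosure

theorem monotone_secChain : Monotone (secChain H e) :=
  monotone_nat_of_le_succ fun _ => le_sup_left.trans (Subgroup.le_topologicalClosure _)

variable {H}

theorem isClosed_secChain (hH : IsClosed (H : Set (AutT d))) :
    ∀ n, IsClosed (secChain H e n : Set (AutT d))
  | 0 => hH
  | _ + 1 => Subgroup.isClosed_topologicalClosure _

theorem secChain_le {S : Subgroup (AutT d)} (hS : IsClosed (S : Set (AutT d)))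
    (hSss : IsSelfSimilar d S) (hHS : H ≤ S) : ∀ n, secChain H e n ≤ S
  | 0 => hHS
  | n + 1 => Subgroup.topologicalClosure_minimal _
      (sup_le (secChain_le hS hSss hHS n) ((secSG_mono (secChain_le hS hSss hHS n) _).trans
        (hSss _))) hS

theorem isSelfSimilar_iSup_secChain (he : ∀ n v, ∃ m, n ≤ m ∧ e m = v) :
    IsSelfSimilar d (⨆ n, secChain H e n) := by
  have hdir : Directed (· ≤ ·) (secChain H e) := (monotone_secChain H e).directed_le
  intro v x hx
  obtain ⟨g, hg, hgv, rfl⟩ := mem_secSG_iff.mp hx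
  obtain ⟨n, hgn⟩ := (Subgroup.mem_iSup_of_directed hdir).mp hg
  obtain ⟨m, hnm, rfl⟩ := he n v
  have : sec g (e m) ∈ secChain H e (m + 1) :=
    Subgroup.le_topologicalClosure _ <| Subgroup.mem_sup_right <|
      mem_secSG_iff.mpr ⟨g, monotone_secChain H e hnm hgn, hgv, rfl⟩
  exact Subgroup.mem_iSup_of_mem (m + 1) this

theorem IsSelfSimilarClosure.eq_topologicalClosure_iSup_secChain {G J : Subgroup (AutT d)}
    (hJ : IsSelfSimilarClosure d G H J) (he : ∀ n v, ∃ m, n ≤ m ∧ e m = v) :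
    J = (⨆ n, secChain H e n).topologicalClosure := by
  obtain ⟨hHJ, hJG, hJ, hJss, hJmin⟩ := hJ
  have hle : (⨆ n, secChain H e n).topologicalClosure ≤ J :=
    Subgroup.topologicalClosure_minimal _ (iSup_le (secChain_le e hJ hJss hHJ)) hJ
  refine le_antisymm (hJmin _ ?_ (hle.trans hJG) (Subgroup.isClosed_topologicalClosure _)
    (isSelfSimilar_iSup_secChain e he).topologicalClosure) hle
  exact (le_iSup (secChain H e) 0).trans (Subgroup.le_topologicalClosure _)

end SecChain

theorem IsSelfSimilarClosure.induction {P : Subgroup (AutT d) → Prop}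
    {G H J : Subgroup (AutT d)} (hJ : IsSelfSimilarClosure d G H J)
    (hH : IsClosed (H : Set (AutT d))) (hPH : P H)
    (hsec : ∀ A v, A ≤ G → IsClosed (A : Set (AutT d)) → P A → P (secSG d A v))
    (hsup : ∀ A B, A ≤ G → B ≤ G → IsClosed (A : Set (AutT d)) →
      IsClosed (B : Set (AutT d)) → P A → P B → P (A ⊔ B).topologicalClosure)
    (hiSup : ∀ K : ℕ → Subgroup (AutT d), Monotone K → (∀ n, K n ≤ G) →
      (∀ n, IsClosed (K n : Set (AutT d))) → (∀ n, P (K n)) →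
      P (⨆ n, K n).topologicalClosure) :
    P J := by
  obtain ⟨e, he⟩ := exists_seq_forall_exists_ge_eq (Vertex d)
  have hKJ := secChain_le e hJ.2.2.1 hJ.2.2.2.1 hJ.1
  have hKG n : secChain H e n ≤ G := (hKJ n).trans hJ.2.1
  have hsecG n : secSG d (secChain H e n) (e n) ≤ G :=
    ((secSG_mono (hKJ n) _).trans (hJ.2.2.2.1 _)).trans hJ.2.1
  have hK n : P (secChain H e n) := by
    induction n with
    | zero => exact hPH
    | succ n ih =>
      have hKn := isClosed_secChain e hH n
      exact hsup _ _ (hKG n) (hsecG n) hKn (isClosed_secSG hKn _) ih (hsec _ _ (hKG n) hKn ih)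
  rw [hJ.eq_topologicalClosure_iSup_secChain e he]
  exact hiSup _ (monotone_secChain H e) hKG (isClosed_secChain e hH) hK

section SecHomRestrict

variable {G : Subgroup (AutT d)} (hG : IsSelfSimilar d G) (v : Vertex d)

def secHomRestrict : (stabT d v).subgroupOf G →* G where
  toFun x := ⟨sec x.1.1 v, hG v ⟨⟨x.1.1, x.2⟩, x.1.2, rfl⟩⟩
  map_one' := Subtype.ext (secHom d v).map_one
  map_mul' x y := Subtype.ext ((secHom d v).map_mul ⟨x.1.1, x.2⟩ ⟨y.1.1, y.2⟩)

theorem continuous_secHomRestrict : Continuous (secHomRestrict hG v) :=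
  ((continuous_sec v).comp (continuous_subtype_val.comp continuous_subtype_val)).subtype_mk _

theorem secHomRestrict_surjective (hGv : secSG d G v = G) :
    Function.Surjective (secHomRestrict hG v) := by
  rintro ⟨y, hy⟩
  obtain ⟨g, hg, hgv, rfl⟩ := mem_secSG_iff.mp (hGv ▸ hy)
  exact ⟨⟨⟨g, hg⟩, hgv⟩, rfl⟩

theorem map_secHomRestrict {A : Subgroup (AutT d)} (hA : A ≤ G) :
    ((A.subgroupOf G).subgroupOf ((stabT d v).subgroupOf G)).map (secHomRestrict hG v) =
      (secSG d A v).subgroupOf G := by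
  ext y
  constructor
  · rintro ⟨x, hx, rfl⟩
    exact mem_secSG_iff.mpr ⟨x.1.1, hx, x.2, rfl⟩
  · intro hy
    obtain ⟨g, hg, hgv, hgy⟩ := mem_secSG_iff.mp hy
    exact ⟨⟨⟨g, hA hg⟩, hgv⟩, hg, Subtype.ext hgy⟩

end SecHomRestrict

theorem formation_criterion_selfSimilar_general
    (Q : ∀ (G : Type) [Group G] [TopologicalSpace G], Subgroup G → Prop)
    (ha : ∀ (G : Type) [Group G] [TopologicalSpace G] [IsTopologicalGroup G] [CompactSpace G]
      [TotallyDisconnectedSpace G] [T2Space G] (H K : Subgroup G),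
      IsClosed (H : Set G) → IsClosed (K : Set G) → Q G H → Q K (H.subgroupOf K))
    (hb : ∀ (G G' : Type) [Group G] [TopologicalSpace G] [IsTopologicalGroup G]
      [CompactSpace G] [TotallyDisconnectedSpace G] [T2Space G] [Group G']
      [TopologicalSpace G'] [IsTopologicalGroup G'] [CompactSpace G']
      [TotallyDisconnectedSpace G'] [T2Space G'] (π : G →* G'),
      Continuous π → Function.Surjective π →
      ∀ H : Subgroup G, IsClosed (H : Set G) → Q G H → Q G' (H.map π))
    (hc : ∀ (G : Type) [Group G] [TopologicalSpace G] [IsTopologicalGroup G] [CompactSpace G]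
      [TotallyDisconnectedSpace G] [T2Space G] (H K : Subgroup G),
      IsClosed (H : Set G) → IsClosed (K : Set G) → Q G H → Q G K →
      Q G ((H ⊔ K).topologicalClosure))
    (hchain : ∀ (G : Type) [Group G] [TopologicalSpace G] [IsTopologicalGroup G]
      [CompactSpace G] [TotallyDisconnectedSpace G] [T2Space G]
      (I : Type) (Hs : I → Subgroup G), (∀ i, IsClosed ((Hs i) : Set G)) →
      (∀ i j, Hs i ≤ Hs j ∨ Hs j ≤ Hs i) → (∀ i, Q G (Hs i)) →
      Q G ((⨆ i, Hs i).topologicalClosure))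
    (d : ℕ)
    (G : Subgroup (AutT d)) (hGclosed : IsClosed (G : Set (AutT d)))
    (hGfractal : IsFractal d G)
    (H : Subgroup (AutT d)) (hHclosed : IsClosed (H : Set (AutT d)))
    (hQH : Q G (H.subgroupOf G)) :
    ∀ J : Subgroup (AutT d), IsSelfSimilarClosure d G H J → Q G (J.subgroupOf G) := by
  intro J hJ
  have : CompactSpace G := isCompact_iff_compactSpace.mp hGclosed.isCompact
  have hGss : IsSelfSimilar d G := fun v => (hGfractal v).le
  have closedIn {A : Subgroup (AutT d)} (hA : IsClosed (A : Set (AutT d))) :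
      IsClosed (A.subgroupOf G : Set G) :=
    Subgroup.isClosed_subgroupOf hA G
  refine hJ.induction (P := fun A => Q G (A.subgroupOf G)) hHclosed hQH ?_ ?_ ?_
  · intro A v hAG hA hQA
    have hS := closedIn (isClosed_stabT v)
    have : CompactSpace ((stabT d v).subgroupOf G) := isCompact_iff_compactSpace.mp hS.isCompact
    rw [← map_secHomRestrict hGss v hAG]
    exact hb _ _ _ (continuous_secHomRestrict hGss v)
      (secHomRestrict_surjective hGss v (hGfractal v)) _
      (Subgroup.isClosed_subgroupOf (closedIn hA) _) (ha _ _ _ (closedIn hA) hS hQA)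
  · intro A B hAG hBG hA hB hQA hQB
    rw [← Subgroup.topologicalClosure_subgroupOf (sup_le hAG hBG),
      Subgroup.subgroupOf_sup hAG hBG]
    exact hc _ _ _ (closedIn hA) (closedIn hB) hQA hQB
  · intro K hK hKG hKc hQK
    rw [← Subgroup.topologicalClosure_subgroupOf (iSup_le hKG), Subgroup.subgroupOf_iSup hKG]
    exact hchain _ ℕ _ (fun n => closedIn (hKc n))
      (fun i j => (le_total i j).imp (fun h => Subgroup.comap_mono (hK h))
        (fun h => Subgroup.comap_mono (hK h))) hQK

/-- **Formation-style criterion for self-similar properties.**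
Let `Q` be a property of pairs `(G, H)` of a profinite group and a closed subgroup,
preserved by (a) passing to closed subgroups, (b) images under continuous surjections of
profinite groups, (c) closed joins, and (d) closures of unions of chains.  Then for every
`d ≥ 2` and every closed fractal subgroup `G` of `Aut T_d`, the property `H ↦ Q(G,H)` of
closed subgroups of `G` is self-similar: it passes to self-similar closures. -/
theorem formation_criterion_selfSimilar
    (Q : ∀ (G : Type) [Group G] [TopologicalSpace G], Subgroup G → Prop)
    (ha : ∀ (G : Type) [Group G] [TopologicalSpace G] [IsTopologicalGroup G] [CompactSpace G]
      [TotallyDisconnectedSpace G] [T2Space G] (H K : Subgroup G),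
      IsClosed (H : Set G) → IsClosed (K : Set G) → Q G H → Q K (H.subgroupOf K))
    (hb : ∀ (G G' : Type) [Group G] [TopologicalSpace G] [IsTopologicalGroup G]
      [CompactSpace G] [TotallyDisconnectedSpace G] [T2Space G] [Group G']
      [TopologicalSpace G'] [IsTopologicalGroup G'] [CompactSpace G']
      [TotallyDisconnectedSpace G'] [T2Space G'] (π : G →* G'),
      Continuous π → Function.Surjective π →
      ∀ H : Subgroup G, IsClosed (H : Set G) → Q G H → Q G' (H.map π))
    (hc : ∀ (G : Type) [Group G] [TopologicalSpace G] [IsTopologicalGroup G] [CompactSpace G]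
      [TotallyDisconnectedSpace G] [T2Space G] (H K : Subgroup G),
      IsClosed (H : Set G) → IsClosed (K : Set G) → Q G H → Q G K →
      Q G ((H ⊔ K).topologicalClosure))
    (hchain : ∀ (G : Type) [Group G] [TopologicalSpace G] [IsTopologicalGroup G]
      [CompactSpace G] [TotallyDisconnectedSpace G] [T2Space G]
      (I : Type) (Hs : I → Subgroup G), (∀ i, IsClosed ((Hs i) : Set G)) →
      (∀ i j, Hs i ≤ Hs j ∨ Hs j ≤ Hs i) → (∀ i, Q G (Hs i)) →
      Q G ((⨆ i, Hs i).topologicalClosure))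
    (d : ℕ) (hd : 2 ≤ d)
    (G : Subgroup (AutT d)) (hGclosed : IsClosed (G : Set (AutT d)))
    (hGfractal : IsFractal d G)
    (H : Subgroup (AutT d)) (hHG : H ≤ G) (hHclosed : IsClosed (H : Set (AutT d)))
    (hQH : Q G (H.subgroupOf G)) :
    ∀ J : Subgroup (AutT d), IsSelfSimilarClosure d G H J → Q G (J.subgroupOf G) :=
  formation_criterion_selfSimilar_general Q ha hb hc hchain d G hGclosed hGfractal H hHclosed hQH

end TreeDyn
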